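/- For λ > 0, define p_λ(u) = 1/2 + (1/2)·sgn(u)·(1 − e^{−|u|/λ}) for u ∈ ℝ (equivalently, p_λ(u) = 1 − (1/2)e^{−u/λ} for u ≥ 0 and p_λ(u) = (1/2)e^{u/λ} for u < 0). Let ε > 0, Δ > 0, and set λ = Δ/ε. Then for all real numbers a, b with |a − b| ≤ Δ: e^{−ε} ≤ p_λ(a)/p_λ(b) ≤ e^{ε} and e^{−ε} ≤ (1 − p_λ(a))/(1 − p_λ(b)) ≤ e^{ε}. -/

import Mathlib

/-!
`p_λ` is the distribution function of the Laplace law of scale `λ`, so it is positive and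
nondecreasing, and `1 - p_λ(u) = p_λ(-u)`; hence both ratios reduce to `p_λ(a) / p_λ(b)`.
For `b ≤ a` the bound `p_λ(a) ≤ e^{(a-b)/λ} p_λ(b)` says that `u ↦ e^{-u/λ} p_λ(u)` is
nonincreasing: it equals `1/2` for `u < 0` and `1/2 - (1 - e^{-u/λ})² / 2` for `u ≥ 0`.
With `λ = Δ/ε` and `|a - b| ≤ Δ` the exponent `|a - b|/λ` is at most `ε`.
-/

/-- The probability that the Laplace-noise `dp-sign` compressor with scale `λ` outputs `1` on
input `u`: `p_λ(u) = 1/2 + (1/2) sgn(u) (1 - e^{-|u|/λ})`. -/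
noncomputable def pLap (lam u : ℝ) : ℝ :=
  1 / 2 + 1 / 2 * Real.sign u * (1 - Real.exp (-|u| / lam))

open Real

lemma exp_neg_div_le_one {lam : ℝ} (hlam : 0 ≤ lam) {u : ℝ} (hu : 0 ≤ u) :
    exp (-u / lam) ≤ 1 :=
  exp_le_one_iff.2 (div_nonpos_of_nonpos_of_nonneg (neg_nonpos.2 hu) hlam)

namespace pLap

variable {lam : ℝ}

lemma of_nonneg (lam : ℝ) {u : ℝ} (hu : 0 ≤ u) : pLap lam u = 1 - exp (-u / lam) / 2 := by
  rcases hu.eq_or_lt with rfl | hu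
  · norm_num [pLap]
  · rw [pLap, Real.sign_of_pos hu, abs_of_pos hu]
    ring

lemma of_neg (lam : ℝ) {u : ℝ} (hu : u < 0) : pLap lam u = exp (u / lam) / 2 := by
  rw [pLap, Real.sign_of_neg hu, abs_of_neg hu, neg_neg]
  ring

lemma neg (lam u : ℝ) : pLap lam (-u) = 1 - pLap lam u := by
  rcases lt_or_ge u 0 with hu | hu
  · rw [of_neg lam hu, of_nonneg lam (neg_nonneg.2 hu.le), neg_neg]
  · rcases hu.eq_or_lt with rfl | hu
    · norm_num [pLap]
    · rw [of_nonneg lam hu.le, of_neg lam (neg_lt_zero.2 hu)]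
      ring

lemma pos (hlam : 0 ≤ lam) (u : ℝ) : 0 < pLap lam u := by
  rcases lt_or_ge u 0 with hu | hu
  · rw [of_neg lam hu]
    positivity
  · rw [of_nonneg lam hu]
    linarith [exp_neg_div_le_one hlam hu]

lemma monotone (hlam : 0 ≤ lam) : Monotone (pLap lam) := by
  intro b a hba
  rcases lt_or_ge a 0 with ha | ha
  · rw [of_neg lam ha, of_neg lam (hba.trans_lt ha)]
    gcongr
  rcases lt_or_ge b 0 with hb | hb
  · rw [of_neg lam hb, of_nonneg lam ha]
    have : exp (b / lam) ≤ 1 := by simpa using exp_neg_div_le_one hlam (neg_nonneg.2 hb.le)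
    linarith [exp_neg_div_le_one hlam ha]
  · rw [of_nonneg lam ha, of_nonneg lam hb]
    gcongr

lemma exp_neg_div_mul_of_neg (lam : ℝ) {u : ℝ} (hu : u < 0) :
    exp (-u / lam) * pLap lam u = 1 / 2 := by
  rw [of_neg lam hu, mul_div_assoc', ← exp_add, neg_div, neg_add_cancel, exp_zero]

lemma exp_neg_div_mul_of_nonneg (lam : ℝ) {u : ℝ} (hu : 0 ≤ u) :
    exp (-u / lam) * pLap lam u = 1 / 2 - (1 - exp (-u / lam)) ^ 2 / 2 := by
  rw [of_nonneg lam hu]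
  ring

lemma antitone_exp_neg_div_mul (hlam : 0 ≤ lam) :
    Antitone fun u ↦ exp (-u / lam) * pLap lam u := by
  intro b a hba
  dsimp only
  rcases lt_or_ge b 0 with hb | hb
  · rw [exp_neg_div_mul_of_neg lam hb]
    rcases lt_or_ge a 0 with ha | ha
    · rw [exp_neg_div_mul_of_neg lam ha]
    · rw [exp_neg_div_mul_of_nonneg lam ha]
      linarith [sq_nonneg (1 - exp (-a / lam))]
  · rw [exp_neg_div_mul_of_nonneg lam hb, exp_neg_div_mul_of_nonneg lam (hb.trans hba)]
    have hexp : exp (-a / lam) ≤ exp (-b / lam) := by gcongr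
    have := pow_le_pow_left₀ (sub_nonneg.2 (exp_neg_div_le_one hlam hb))
      (sub_le_sub_left hexp 1) 2
    linarith

lemma le_exp_mul_of_le (hlam : 0 ≤ lam) {a b : ℝ} (hba : b ≤ a) :
    pLap lam a ≤ exp ((a - b) / lam) * pLap lam b := by
  have hsplit : exp ((a - b) / lam) = exp (a / lam) * exp (-b / lam) := by
    rw [← exp_add, ← add_div, ← sub_eq_add_neg]
  calc pLap lam a = exp (a / lam) * (exp (-a / lam) * pLap lam a) := by
        rw [← mul_assoc, ← exp_add, ← add_div, add_neg_cancel, zero_div, exp_zero, one_mul]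
    _ ≤ exp (a / lam) * (exp (-b / lam) * pLap lam b) :=
        mul_le_mul_of_nonneg_left (antitone_exp_neg_div_mul hlam hba) (exp_pos _).le
    _ = exp ((a - b) / lam) * pLap lam b := by rw [hsplit, mul_assoc]

lemma le_exp_abs_mul (hlam : 0 ≤ lam) (a b : ℝ) :
    pLap lam a ≤ exp (|a - b| / lam) * pLap lam b := by
  rcases le_total b a with hba | hab
  · rw [abs_of_nonneg (sub_nonneg.2 hba)]
    exact le_exp_mul_of_le hlam hba
  · calc pLap lam a ≤ pLap lam b := monotone hlam hab
      _ ≤ exp (|a - b| / lam) * pLap lam b :=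
        le_mul_of_one_le_left (pos hlam b).le (one_le_exp (by positivity))

lemma exp_neg_le_div_and_div_le_exp {ε : ℝ} (hlam : 0 < lam) {a b : ℝ}
    (hab : |a - b| ≤ ε * lam) :
    exp (-ε) ≤ pLap lam a / pLap lam b ∧ pLap lam a / pLap lam b ≤ exp ε := by
  have bound : ∀ x y, |x - y| ≤ ε * lam → pLap lam x ≤ exp ε * pLap lam y := fun x y h ↦
    (le_exp_abs_mul hlam.le x y).trans <| by
      gcongr
      · exact (pos hlam.le y).le
      · exact (div_le_iff₀ hlam).2 h
  constructor
  · rw [le_div_iff₀ (pos hlam.le b), exp_neg, inv_mul_le_iff₀ (exp_pos ε)]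
    exact bound b a (abs_sub_comm a b ▸ hab)
  · rw [div_le_iff₀ (pos hlam.le b)]
    exact bound a b hab

end pLap

/-- Scalar `(ε,0)`-differential privacy of the Laplace `dp-sign` compressor:
with `λ = Δ/ε`, for all `a, b` with `|a - b| ≤ Δ`, both `p_λ(a)/p_λ(b)` and
`(1 - p_λ(a))/(1 - p_λ(b))` lie in `[e^{-ε}, e^{ε}]`. -/
theorem stmt_14 (ε Δ : ℝ) (hε : 0 < ε) (hΔ : 0 < Δ)
    (lam : ℝ) (hlam : lam = Δ / ε)
    (a b : ℝ) (hab : |a - b| ≤ Δ) :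
    (Real.exp (-ε) ≤ pLap lam a / pLap lam b ∧ pLap lam a / pLap lam b ≤ Real.exp ε) ∧
    (Real.exp (-ε) ≤ (1 - pLap lam a) / (1 - pLap lam b) ∧
      (1 - pLap lam a) / (1 - pLap lam b) ≤ Real.exp ε) := by
  have hlam_pos : 0 < lam := hlam ▸ div_pos hΔ hε
  have hΔ_eq : Δ = ε * lam := by rw [hlam, mul_div_cancel₀ Δ hε.ne']
  refine ⟨pLap.exp_neg_le_div_and_div_le_exp hlam_pos (hΔ_eq ▸ hab), ?_⟩
  rw [← pLap.neg, ← pLap.neg]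
  refine pLap.exp_neg_le_div_and_div_le_exp hlam_pos ?_
  rwa [neg_sub_neg, abs_sub_comm, ← hΔ_eq]
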